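/- In the affine Weyl group Ã_n, for 2 ≤ k ≤ n, k ≤ j ≤ n, and j−1 ≤ l ≤ n−1, the identity r_0 (r_n ⋯ r_k)(r_1 ⋯ r_l) r_0 (r_n ⋯ r_j)(r_1 ⋯ r_{l+1}) = r_n r_0 (r_n ⋯ r_k)(r_1 ⋯ r_l) r_0 (r_n ⋯ r_j)(r_1 ⋯ r_l) holds. -/

import Mathlib

/-- The ascending product `r_a r_{a+1} ⋯ r_b` (the identity when `b < a`). -/
def ascProd {G : Type*} [Monoid G] (r : ℕ → G) (a b : ℕ) : G :=
  ((List.range' a (b + 1 - a)).map r).prod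

/-- The descending product `r_a r_{a-1} ⋯ r_b` (the identity when `a < b`). -/
def descProd {G : Type*} [Monoid G] (r : ℕ → G) (a b : ℕ) : G :=
  ((List.range' b (a + 1 - b)).reverse.map r).prod

/-!
A generator `r_i` with `a < i ≤ c` passes through `r_a ⋯ r_c` as `r_{i-1}`: it commutes with
`r_a ⋯ r_{i-2}`, crosses `r_{i-1} r_i` as `r_{i-1}` by the braid relation, and `r_{i-1}` commutes
with `r_{i+1} ⋯ r_c`. Hence a whole block `r_b ⋯ r_j` or `r_j ⋯ r_b` with `j > a` passes through
`r_a ⋯ r_c` with every index lowered by one. Together with the commutation of `r_n ⋯ r_{l+2}`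
with `r_1 ⋯ r_l`, this gives
`(r_2 ⋯ r_l)(r_n ⋯ r_j)(r_1 ⋯ r_{l+1}) = (r_1 ⋯ r_l)(r_n ⋯ r_j)(r_1 ⋯ r_l)`.
What remains is to move the two copies of `r_0`, which commute with `r_2, …, r_{n-1}`, using
`r_0 r_1 r_0 = r_1 r_0 r_1` and `r_0 r_n r_0 = r_n r_0 r_n`.
-/

section Monoid

variable {M : Type*} [Monoid M] (r : ℕ → M)

theorem List.prod_map_mul_eq_mul_prod_map {ι : Type*} (L : List ι) (f g : ι → M) (y : M)
    (h : ∀ i ∈ L, f i * y = y * g i) : (L.map f).prod * y = y * (L.map g).prod := by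
  induction L with
  | nil => simp
  | cons a L ih =>
    simp only [List.map_cons, List.prod_cons, List.forall_mem_cons] at h ⊢
    rw [mul_assoc, ih h.2, ← mul_assoc, h.1, mul_assoc]

theorem ascProd_eq_mul_ascProd {a b c : ℕ} (hab : a ≤ b + 1) (hbc : b ≤ c) :
    ascProd r a c = ascProd r a b * ascProd r (b + 1) c := by
  have hsplit := List.range'_append_1 (s := a) (m := b + 1 - a) (n := c + 1 - (b + 1))
  rw [show a + (b + 1 - a) = b + 1 by omega,
    show b + 1 - a + (c + 1 - (b + 1)) = c + 1 - a by omega] at hsplit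
  simp only [ascProd, ← List.prod_append, ← List.map_append, hsplit]

theorem ascProd_self (a : ℕ) : ascProd r a a = r a := by
  simp [ascProd]

theorem ascProd_eq_mul {a b : ℕ} (h : a ≤ b) : ascProd r a b = r a * ascProd r (a + 1) b := by
  rw [ascProd_eq_mul_ascProd r a.le_succ h, ascProd_self]

theorem ascProd_succ {a b : ℕ} (h : a ≤ b + 1) :
    ascProd r a (b + 1) = ascProd r a b * r (b + 1) := by
  rw [ascProd_eq_mul_ascProd r h b.le_succ, ascProd_self]

theorem descProd_eq_mul_descProd {a b c : ℕ} (hbc : b ≤ c + 1) (hca : c ≤ a) :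
    descProd r a b = descProd r a (c + 1) * descProd r c b := by
  have hsplit := List.range'_append_1 (s := b) (m := c + 1 - b) (n := a + 1 - (c + 1))
  rw [show b + (c + 1 - b) = c + 1 by omega,
    show c + 1 - b + (a + 1 - (c + 1)) = a + 1 - b by omega] at hsplit
  simp only [descProd, ← List.prod_append, ← List.map_append, ← List.reverse_append, hsplit]

theorem descProd_self (a : ℕ) : descProd r a a = r a := by
  simp [descProd]

theorem descProd_succ {a b : ℕ} (h : b ≤ a + 1) :
    descProd r (a + 1) b = r (a + 1) * descProd r a b := by
  rw [descProd_eq_mul_descProd r h a.le_succ, descProd_self]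

theorem Commute.ascProd_right {x : M} {a b : ℕ} (h : ∀ p, a ≤ p → p ≤ b → Commute x (r p)) :
    Commute x (ascProd r a b) :=
  Commute.list_prod_right _ _ <| by
    simp only [List.mem_map, List.mem_range'_1]
    rintro _ ⟨p, hp, rfl⟩
    exact h p hp.1 (by omega)

theorem Commute.descProd_right {x : M} {a b : ℕ} (h : ∀ p, b ≤ p → p ≤ a → Commute x (r p)) :
    Commute x (descProd r a b) :=
  Commute.list_prod_right _ _ <| by
    simp only [List.mem_map, List.mem_reverse, List.mem_range'_1]
    rintro _ ⟨p, hp, rfl⟩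
    exact h p hp.1 (by omega)

theorem ascProd_mul_eq_mul_ascProd_pred {y : M} {a b : ℕ} (ha : 2 ≤ a)
    (h : ∀ p, a ≤ p → p ≤ b → r p * y = y * r (p - 1)) :
    ascProd r a b * y = y * ascProd r (a - 1) (b - 1) := by
  have hpred :
      (List.range' a (b + 1 - a)).map (· - 1) = List.range' (a - 1) (b - 1 + 1 - (a - 1)) := by
    rw [List.map_sub_range' (by omega)]
    congr 1
    omega
  unfold ascProd
  rw [List.prod_map_mul_eq_mul_prod_map _ r (r <| · - 1) y
    (by simpa using fun p hp₁ hp₂ => h p hp₁ (by omega)), ← hpred, List.map_map]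
  rfl

theorem descProd_mul_eq_mul_descProd_pred {y : M} {a b : ℕ} (hb : 2 ≤ b)
    (h : ∀ p, b ≤ p → p ≤ a → r p * y = y * r (p - 1)) :
    descProd r a b * y = y * descProd r (a - 1) (b - 1) := by
  have hpred : (List.range' b (a + 1 - b)).reverse.map (· - 1) =
      (List.range' (b - 1) (a - 1 + 1 - (b - 1))).reverse := by
    rw [List.map_reverse, List.map_sub_range' (by omega)]
    congr 2
    omega
  unfold descProd
  rw [List.prod_map_mul_eq_mul_prod_map _ r (r <| · - 1) y
    (by simpa using fun p hp₁ hp₂ => h p hp₁ (by omega)), ← hpred, List.map_map]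
  rfl

end Monoid

section Relations

variable {M : Type*} [Monoid M] {n : ℕ} {r : ℕ → M}
  (hcomm : ∀ i j, i + 1 < j → j ≤ n → ¬(i = 0 ∧ j = n) → r i * r j = r j * r i)
  (hbraid : ∀ i < n, r i * r (i + 1) * r i = r (i + 1) * r i * r (i + 1))

include hcomm hbraid in
theorem mul_ascProd_eq_ascProd_mul_pred {a c i : ℕ} (ha : 1 ≤ a) (hai : a < i) (hic : i ≤ c)
    (hcn : c ≤ n) : r i * ascProd r a c = ascProd r a c * r (i - 1) := by
  obtain ⟨p, rfl⟩ : ∃ p, i = p + 2 := ⟨i - 2, by omega⟩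
  have hsplit : ascProd r a c = ascProd r a p * (r (p + 1) * r (p + 2)) * ascProd r (p + 3) c := by
    rw [ascProd_eq_mul_ascProd r (show a ≤ p + 1 by omega) (show p ≤ c by omega),
      ascProd_eq_mul r (show p + 1 ≤ c by omega), ascProd_eq_mul r (show p + 2 ≤ c by omega)]
    simp only [mul_assoc]
  have hleft : Commute (r (p + 2)) (ascProd r a p) :=
    Commute.ascProd_right r fun q hq₁ hq₂ =>
      (hcomm q (p + 2) (by omega) (hic.trans hcn) (by omega)).symm
  have hright : Commute (r (p + 1)) (ascProd r (p + 3) c) :=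
    Commute.ascProd_right r fun q hq₁ hq₂ => hcomm (p + 1) q (by omega) (by omega) (by omega)
  have hbraid' : r (p + 1) * r (p + 2) * r (p + 1) = r (p + 2) * r (p + 1) * r (p + 2) :=
    hbraid (p + 1) (by omega)
  calc r (p + 2) * ascProd r a c
      = (r (p + 2) * ascProd r a p) * (r (p + 1) * r (p + 2)) * ascProd r (p + 3) c := by
        rw [hsplit]; simp only [mul_assoc]
    _ = ascProd r a p * (r (p + 1) * r (p + 2) * r (p + 1)) * ascProd r (p + 3) c := by
        rw [hleft.eq, hbraid']; simp only [mul_assoc]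
    _ = ascProd r a p * (r (p + 1) * r (p + 2)) * (r (p + 1) * ascProd r (p + 3) c) := by
        simp only [mul_assoc]
    _ = ascProd r a c * r (p + 2 - 1) := by
        rw [hright.eq, hsplit]; simp only [mul_assoc]; rfl

include hcomm hbraid in
theorem descProd_mul_ascProd {a b c j : ℕ} (ha : 1 ≤ a) (haj : a < j) (hbc : b ≤ c) (hcn : c ≤ n) :
    descProd r b j * ascProd r a c = ascProd r a c * descProd r (b - 1) (j - 1) :=
  descProd_mul_eq_mul_descProd_pred r (by omega) fun _ hp₁ hp₂ =>
    mul_ascProd_eq_ascProd_mul_pred hcomm hbraid ha (by omega) (by omega) hcn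

include hcomm hbraid in
theorem ascProd_mul_ascProd {a b c j : ℕ} (ha : 1 ≤ a) (haj : a < j) (hbc : b ≤ c) (hcn : c ≤ n) :
    ascProd r j b * ascProd r a c = ascProd r a c * ascProd r (j - 1) (b - 1) :=
  ascProd_mul_eq_mul_ascProd_pred r (by omega) fun _ hp₁ hp₂ =>
    mul_ascProd_eq_ascProd_mul_pred hcomm hbraid ha (by omega) (by omega) hcn

include hcomm hbraid in
theorem ascProd_two_mul_descProd_mul_ascProd_succ {b j l : ℕ} (hj : 2 ≤ j) (hjl : j ≤ l + 1)
    (hlb : l + 1 ≤ b) (hbn : b ≤ n) :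
    ascProd r 2 l * descProd r b j * ascProd r 1 (l + 1) =
      ascProd r 1 l * descProd r b j * ascProd r 1 l := by
  have hD : descProd r b j = descProd r b (l + 2) * (r (l + 1) * descProd r l j) := by
    rw [descProd_eq_mul_descProd r (show j ≤ l + 1 + 1 by omega) hlb, descProd_succ r hjl]
  have hcommD {a : ℕ} (ha : 1 ≤ a) : Commute (descProd r b (l + 2)) (ascProd r a l) :=
    Commute.ascProd_right r fun p hp₁ hp₂ => (Commute.descProd_right r fun q hq₁ hq₂ =>
      hcomm p q (by omega) (hq₂.trans hbn) (by omega)).symm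
  have hA2 : ascProd r 2 l * r (l + 1) = ascProd r 2 (l + 1) := (ascProd_succ r (by omega)).symm
  have hA1 : ascProd r 1 l * r (l + 1) = ascProd r 1 (l + 1) := (ascProd_succ r (by omega)).symm
  have hshiftD {c : ℕ} (hc : l ≤ c) (hcn : c ≤ n) :
      descProd r l j * ascProd r 1 c = ascProd r 1 c * descProd r (l - 1) (j - 1) :=
    descProd_mul_ascProd hcomm hbraid le_rfl (by omega) hc hcn
  have hshiftA :
      ascProd r 2 (l + 1) * ascProd r 1 (l + 1) = ascProd r 1 (l + 1) * ascProd r 1 l :=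
    ascProd_mul_ascProd hcomm hbraid le_rfl one_lt_two le_rfl (by omega)
  calc ascProd r 2 l * descProd r b j * ascProd r 1 (l + 1)
      = descProd r b (l + 2) * (ascProd r 2 l * r (l + 1)) *
          (descProd r l j * ascProd r 1 (l + 1)) := by
        rw [hD, ← mul_assoc, ← mul_assoc, ← (hcommD one_le_two).eq]; simp only [mul_assoc]
    _ = descProd r b (l + 2) * (ascProd r 2 (l + 1) * ascProd r 1 (l + 1)) *
          descProd r (l - 1) (j - 1) := by
        rw [hA2, hshiftD l.le_succ (by omega)]; simp only [mul_assoc]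
    _ = descProd r b (l + 2) * ascProd r 1 l *
          (r (l + 1) * (ascProd r 1 l * descProd r (l - 1) (j - 1))) := by
        rw [hshiftA, ← hA1]; simp only [mul_assoc]
    _ = ascProd r 1 l * descProd r b j * ascProd r 1 l := by
        rw [← hshiftD le_rfl (by omega), (hcommD le_rfl).eq, hD]; simp only [mul_assoc]

include hcomm in
theorem ascProd_one_mul_r_zero {l : ℕ} (hl : 1 ≤ l) (hln : l < n) :
    ascProd r 1 l * r 0 = r 1 * r 0 * ascProd r 2 l := by
  have hc : Commute (r 0) (ascProd r 2 l) :=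
    Commute.ascProd_right r fun p hp₁ hp₂ => hcomm 0 p (by omega) (by omega) (by omega)
  rw [ascProd_eq_mul r hl, mul_assoc, ← hc.eq, mul_assoc]

include hcomm hbraid in
theorem r_zero_mul_ascProd_one_mul_r_zero {l : ℕ} (hl : 1 ≤ l) (hln : l < n) :
    r 0 * ascProd r 1 l * r 0 = r 1 * r 0 * ascProd r 1 l := by
  have hbraid₀ : r 0 * r 1 * r 0 = r 1 * r 0 * r 1 := hbraid 0 (by omega)
  rw [mul_assoc, ascProd_one_mul_r_zero hcomm hl hln, ← mul_assoc, ← mul_assoc, hbraid₀,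
    ascProd_eq_mul r hl]
  simp only [mul_assoc]

include hcomm in
theorem r_zero_mul_descProd_mul_r_zero (hbraid₀ₙ : r 0 * r n * r 0 = r n * r 0 * r n) {k : ℕ}
    (hk : 2 ≤ k) (hkn : k ≤ n) : r 0 * descProd r n k * r 0 = r n * r 0 * descProd r n k := by
  obtain ⟨m, rfl⟩ : ∃ m, n = m + 1 := ⟨n - 1, by omega⟩
  have hc : Commute (r 0) (descProd r m k) :=
    Commute.descProd_right r fun p hp₁ hp₂ => hcomm 0 p (by omega) (by omega) (by omega)
  rw [descProd_succ r (by omega), ← mul_assoc, mul_assoc _ (descProd r m k), ← hc.eq, ← mul_assoc,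
    hbraid₀ₙ]
  simp only [mul_assoc]

end Relations

theorem affine_g10_general (n : ℕ) {G : Type*} [Group G] (r : ℕ → G)
    (h2 : ∀ i j, i + 1 < j → j ≤ n → ¬(i = 0 ∧ j = n) → r i * r j = r j * r i)
    (h3 : ∀ i < n, r i * r (i + 1) * r i = r (i + 1) * r i * r (i + 1))
    (h4 : r 0 * r n * r 0 = r n * r 0 * r n)
    (k j l : ℕ) (hk2 : 2 ≤ k) (hkn : k ≤ n) (hkj : k ≤ j)
    (hjl : j - 1 ≤ l) (hln : l ≤ n - 1) :
    r 0 * descProd r n k * ascProd r 1 l * r 0 * descProd r n j * ascProd r 1 (l + 1) =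
      r n * (r 0 * descProd r n k * ascProd r 1 l * r 0 * descProd r n j * ascProd r 1 l) := by
  have hl : 1 ≤ l := by omega
  have hl' : l < n := by omega
  calc r 0 * descProd r n k * ascProd r 1 l * r 0 * descProd r n j * ascProd r 1 (l + 1)
      = r 0 * descProd r n k * (ascProd r 1 l * r 0) * descProd r n j * ascProd r 1 (l + 1) := by
        simp only [mul_assoc]
    _ = r 0 * descProd r n k * (r 1 * r 0) *
          (ascProd r 2 l * descProd r n j * ascProd r 1 (l + 1)) := by
        rw [ascProd_one_mul_r_zero h2 hl hl']; simp only [mul_assoc]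
    _ = r 0 * descProd r n k * (r 1 * r 0 * ascProd r 1 l) * (descProd r n j * ascProd r 1 l) := by
        rw [ascProd_two_mul_descProd_mul_ascProd_succ h2 h3 (by omega) (by omega) (by omega) le_rfl]
        simp only [mul_assoc]
    _ = (r 0 * descProd r n k * r 0) * (ascProd r 1 l * r 0 * descProd r n j * ascProd r 1 l) := by
        rw [← r_zero_mul_ascProd_one_mul_r_zero h2 h3 hl hl']; simp only [mul_assoc]
    _ = r n * (r 0 * descProd r n k * ascProd r 1 l * r 0 * descProd r n j * ascProd r 1 l) := by
        rw [r_zero_mul_descProd_mul_r_zero h2 h4 hk2 hkn]; simp only [mul_assoc]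

/-- In Ã_n, for 2 ≤ k ≤ n, k ≤ j ≤ n, j−1 ≤ l ≤ n−1: r_0 (r_n ⋯ r_k)(r_1 ⋯ r_l) r_0 (r_n ⋯ r_j)(r_1 ⋯ r_{l+1}) = r_n r_0 (r_n ⋯ r_k)(r_1 ⋯ r_l) r_0 (r_n ⋯ r_j)(r_1 ⋯ r_l). -/
theorem affine_g10 (n : ℕ) (hn : 2 ≤ n) {G : Type*} [Group G] (r : ℕ → G)
    (h1 : ∀ i ≤ n, r i * r i = 1)
    (h2 : ∀ i j, i + 1 < j → j ≤ n → ¬(i = 0 ∧ j = n) → r i * r j = r j * r i)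
    (h3 : ∀ i < n, r i * r (i + 1) * r i = r (i + 1) * r i * r (i + 1))
    (h4 : r 0 * r n * r 0 = r n * r 0 * r n)
    (k j l : ℕ) (hk2 : 2 ≤ k) (hkn : k ≤ n) (hkj : k ≤ j) (hjn : j ≤ n)
    (hjl : j - 1 ≤ l) (hln : l ≤ n - 1) :
    r 0 * descProd r n k * ascProd r 1 l * r 0 * descProd r n j * ascProd r 1 (l + 1) =
      r n * (r 0 * descProd r n k * ascProd r 1 l * r 0 * descProd r n j * ascProd r 1 l) :=
  affine_g10_general n r h2 h3 h4 k j l hk2 hkn hkj hjl hln
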